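/- arXiv:1211.5476 — 4 statements merged into one kernel-verified Lean document; each statement's English description precedes it below -/
import Mathlib

section
/- For a smooth compactly supported function φ: ℝ³ → ℂ (away from the origin) and any real m ≥ 0, the inequality ∫_{ℝ³} |φ(x)|²/|x| dx + √(1+m²) ∫_{ℝ³} |φ(x)|² dx ≤ ∫_{ℝ³} |x| |∂_r φ(x)|² dx + (1+m²) ∫_{ℝ³} |x| |φ(x)|² dx holds, where ∂_r φ(x) = (x/|x|)·∇φ(x) is the radial derivative. -/
noncomputable section
open MeasureTheory Matrix Finset

abbrev E3 := EuclideanSpace ℝ (Fin 3)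

/-- The Pauli matrices. -/
def pauli : Fin 3 → Matrix (Fin 2) (Fin 2) ℂ :=
  ![!![0, 1; 1, 0], !![0, -Complex.I; Complex.I, 0], !![1, 0; 0, -1]]

/-- `σ · a` for a real vector `a`. -/
def sigmaDot (a : Fin 3 → ℝ) : Matrix (Fin 2) (Fin 2) ℂ :=
  ∑ k, (a k : ℂ) • pauli k

/-- `(σ · ∇)φ` for a `ℂ²`-valued function. -/
def sigmaGrad (φ : E3 → Fin 2 → ℂ) (x : E3) : Fin 2 → ℂ :=
  ∑ k, (pauli k).mulVec (fderiv ℝ φ x (EuclideanSpace.single k 1))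

/-- The radial derivative `∂_r φ(x) = (x/|x|)·∇φ(x)`. -/
def radialDeriv {F : Type*} [NormedAddCommGroup F] [NormedSpace ℝ F]
    (φ : E3 → F) (x : E3) : F := fderiv ℝ φ x (‖x‖⁻¹ • x)

/-- The Dirac matrices `α_k` in block form. -/
def diracAlpha (k : Fin 3) : Matrix (Fin 4) (Fin 4) ℂ :=
  Matrix.reindex finSumFinEquiv finSumFinEquiv ((Matrix.fromBlocks 0 (pauli k) (pauli k) 0 : Matrix (Fin 2 ⊕ Fin 2) (Fin 2 ⊕ Fin 2) ℂ))

/-- The Dirac matrix `β` in block form. -/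
def diracBeta : Matrix (Fin 4) (Fin 4) ℂ :=
  Matrix.reindex finSumFinEquiv finSumFinEquiv ((Matrix.fromBlocks 1 0 0 (-1) : Matrix (Fin 2 ⊕ Fin 2) (Fin 2 ⊕ Fin 2) ℂ))

/-- `(α · ∇)ψ` for a `ℂ⁴`-valued function. -/
def alphaGrad (ψ : E3 → Fin 4 → ℂ) (x : E3) : Fin 4 → ℂ :=
  ∑ k, (diracAlpha k).mulVec (fderiv ℝ ψ x (EuclideanSpace.single k 1))


open scoped RealInnerProductSpace

lemma integral_dirDeriv_eq_zero (g : E3 → ℝ) (hg : ContDiff ℝ (⊤ : ℕ∞) g)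
    (hcg : HasCompactSupport g) (v : E3) : ∫ x : E3, fderiv ℝ g x v = 0 := by
  obtain ⟨C, hC⟩ := hg.lipschitzWith_of_hasCompactSupport hcg (by simp)
  have h := LipschitzWith.integral_lineDeriv_mul_eq (μ := volume)
    (LipschitzWith.const' (K := 1) (b := (1:ℝ))) hC hcg v
  have hz : ∀ x : E3, lineDeriv ℝ (fun _ : E3 => (1:ℝ)) x v = 0 := fun x => by
    rw [(differentiableAt_const _).lineDeriv_eq_fderiv]; simp
  simp only [hz, zero_mul, integral_zero, mul_one] at h
  have h2 : ∀ x : E3, lineDeriv ℝ g x (-v) = - fderiv ℝ g x v := by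
    intro x
    rw [(hg.differentiable (by simp) x).lineDeriv_eq_fderiv, map_neg]
  rw [eq_comm] at h
  simp only [h2, integral_neg, neg_eq_zero] at h
  exact h

lemma hasFDerivAt_norm_E3 {x : E3} (hx : x ≠ 0) :
    HasFDerivAt (fun y : E3 => ‖y‖) (‖x‖⁻¹ • innerSL ℝ x) x := by
  have h1 : HasFDerivAt (fun y : E3 => ‖y‖ ^ 2) ((2:ℕ) • innerSL ℝ x) x :=
    (hasStrictFDerivAt_norm_sq x).hasFDerivAt
  have hr : (0:ℝ) < ‖x‖ := norm_pos_iff.2 hx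
  have hs : (‖x‖ ^ 2 : ℝ) ≠ 0 := by positivity
  have h2 : HasDerivAt Real.sqrt (1 / (2 * Real.sqrt (‖x‖ ^ 2))) (‖x‖ ^ 2) :=
    Real.hasDerivAt_sqrt hs
  have h3 := h2.comp_hasFDerivAt x h1
  have heq : (Real.sqrt ∘ fun y : E3 => ‖y‖ ^ 2) = fun y : E3 => ‖y‖ := by
    funext y; simp [Function.comp, Real.sqrt_sq (norm_nonneg y)]
  rw [heq] at h3
  have hsc : (1 / (2 * Real.sqrt (‖x‖ ^ 2))) • ((2:ℕ) • innerSL ℝ x)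
      = ‖x‖⁻¹ • innerSL ℝ x := by
    rw [Real.sqrt_sq hr.le]
    ext v
    simp only [ContinuousLinearMap.smul_apply, smul_eq_mul, ← Nat.cast_smul_eq_nsmul ℝ,
      ContinuousLinearMap.coe_smul', Pi.smul_apply]
    field_simp
    ring
  rw [hsc] at h3
  exact h3

section Aux
variable (φ : E3 → ℂ) (s : ℝ)

/-- the scalar coefficient of the vector field -/
def cfun (x : E3) : ℝ := (‖x‖⁻¹ + s) * ‖φ x‖ ^ 2

/-- the divergence of the vector field `cfun • x` -/
def dfun (x : E3) : ℝ :=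
  (2 * ‖x‖⁻¹ + 3 * s) * ‖φ x‖ ^ 2 + (1 + s * ‖x‖) * (2 * ⟪φ x, radialDeriv φ x⟫)

variable {φ s}
variable (hφ : ContDiff ℝ (⊤ : ℕ∞) φ) (hc : HasCompactSupport φ) (h0 : (0 : E3) ∉ tsupport φ)

lemma phi_zero {x : E3} (hx : x ∉ tsupport φ) : φ x = 0 :=
  image_eq_zero_of_notMem_tsupport hx

lemma phi_ev_zero {x : E3} (hx : x ∉ tsupport φ) : φ =ᶠ[nhds x] 0 :=
  Filter.eventually_of_mem ((isClosed_tsupport φ).isOpen_compl.mem_nhds hx)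
    (fun y hy => image_eq_zero_of_notMem_tsupport hy)

lemma fderiv_phi_zero {x : E3} (hx : x ∉ tsupport φ) : fderiv ℝ φ x = 0 := by
  rw [Filter.EventuallyEq.fderiv_eq (phi_ev_zero hx)]
  exact fderiv_const_apply 0

lemma radial_zero {x : E3} (hx : x ∉ tsupport φ) : radialDeriv φ x = 0 := by
  rw [radialDeriv, fderiv_phi_zero hx]; rfl

include hφ in
lemma contDiff_cfun (h0 : (0 : E3) ∉ tsupport φ) : ContDiff ℝ (⊤ : ℕ∞) (cfun φ s) := by
  rw [contDiff_iff_contDiffAt]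
  intro x
  by_cases hx : x ∈ tsupport φ
  · have hx0 : x ≠ 0 := fun h => h0 (h ▸ hx)
    have h1 : ContDiffAt ℝ (⊤ : ℕ∞) (fun y : E3 => ‖y‖⁻¹ + s) x :=
      (((contDiffAt_norm ℝ hx0).inv (norm_ne_zero_iff.2 hx0)).add contDiffAt_const)
    exact h1.mul (hφ.contDiffAt.norm_sq ℝ)
  · have hev : cfun φ s =ᶠ[nhds x] (fun _ => 0) :=
      Filter.eventually_of_mem ((isClosed_tsupport φ).isOpen_compl.mem_nhds hx)
        (fun y hy => by simp [cfun, phi_zero hy])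
    exact (contDiffAt_const (c := (0:ℝ))).congr_of_eventuallyEq hev

lemma sum_smul_single (x : E3) :
    (∑ k : Fin 3, x k • EuclideanSpace.single k (1:ℝ)) = x := by
  ext j
  rw [show ((∑ k : Fin 3, x k • EuclideanSpace.single k (1:ℝ)) j)
      = ∑ k : Fin 3, (x k • EuclideanSpace.single k (1:ℝ)) j from
    by rw [WithLp.ofLp_sum]; exact Finset.sum_apply j Finset.univ _]
  simp [EuclideanSpace.single_apply]

include hφ h0 in
/-- pointwise divergence identity -/
lemma div_identity (x : E3) :
    ∑ k : Fin 3, fderiv ℝ (fun y => cfun φ s y * y k) x (EuclideanSpace.single k 1)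
      = dfun φ s x := by
  by_cases hx : x ∈ tsupport φ
  · have hx0 : x ≠ 0 := fun h => h0 (h ▸ hx)
    have hr : (0:ℝ) < ‖x‖ := norm_pos_iff.2 hx0
    set r : ℝ := ‖x‖ with hrdef
    -- derivative of φ
    have hDφ : HasFDerivAt φ (fderiv ℝ φ x) x := (hφ.differentiable (by simp) x).hasFDerivAt
    set L := fderiv ℝ φ x with hL
    -- derivative of ‖·‖⁻¹
    have hn : HasFDerivAt (fun y : E3 => ‖y‖) (r⁻¹ • innerSL ℝ x) x := hasFDerivAt_norm_E3 hx0
    have hinv : HasFDerivAt (fun y : E3 => ‖y‖⁻¹)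
        ((-(r ^ 2)⁻¹) • (r⁻¹ • innerSL ℝ x)) x :=
      (hasDerivAt_inv hr.ne').comp_hasFDerivAt x hn
    -- derivative of f = ‖φ ·‖ ^ 2
    have hf : HasFDerivAt (fun y => ‖φ y‖ ^ 2) ((2:ℕ) • (innerSL ℝ (φ x)).comp L) x := hDφ.norm_sq
    -- derivative of cfun
    have hca : HasFDerivAt (fun y : E3 => ‖y‖⁻¹ + s)
        ((-(r ^ 2)⁻¹) • (r⁻¹ • innerSL ℝ x)) x := hinv.add_const s
    have hcd : HasFDerivAt (cfun φ s)
        ((r⁻¹ + s) • ((2:ℕ) • (innerSL ℝ (φ x)).comp L)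
          + (‖φ x‖ ^ 2) • ((-(r ^ 2)⁻¹) • (r⁻¹ • innerSL ℝ x))) x := hca.mul hf
    set c' := (r⁻¹ + s) • ((2:ℕ) • (innerSL ℝ (φ x)).comp L)
          + (‖φ x‖ ^ 2) • ((-(r ^ 2)⁻¹) • (r⁻¹ • innerSL ℝ x)) with hc'def
    -- derivative of each coordinate function
    have hproj : ∀ k : Fin 3, HasFDerivAt (fun y : E3 => y k)
        (EuclideanSpace.proj k : E3 →L[ℝ] ℝ) x :=
      fun k => (EuclideanSpace.proj k : E3 →L[ℝ] ℝ).hasFDerivAt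
    have hgk : ∀ k : Fin 3, fderiv ℝ (fun y => cfun φ s y * y k) x
        = (cfun φ s x) • (EuclideanSpace.proj k : E3 →L[ℝ] ℝ) + (x k) • c' :=
      fun k => (hcd.mul (hproj k)).fderiv
    have hsum : ∑ k : Fin 3, fderiv ℝ (fun y => cfun φ s y * y k) x (EuclideanSpace.single k 1)
        = 3 * cfun φ s x + c' x := by
      simp only [hgk, ContinuousLinearMap.add_apply, ContinuousLinearMap.smul_apply]
      rw [Finset.sum_add_distrib]
      congr 1
      · simp [PiLp.proj_apply, EuclideanSpace.single_apply, smul_eq_mul,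
          Fin.sum_univ_three]
      · have : ∀ k : Fin 3, x k • c' (EuclideanSpace.single k 1)
            = c' (x k • EuclideanSpace.single k 1) := fun k => (c'.map_smul _ _).symm
        simp only [this, ← _root_.map_sum, sum_smul_single]
    rw [hsum]
    -- now evaluate
    have hinner_self : ⟪x, x⟫ = r ^ 2 := real_inner_self_eq_norm_sq x
    have hrad : radialDeriv φ x = r⁻¹ • L x := by
      rw [show radialDeriv φ x = L (r⁻¹ • x) from rfl]
      exact L.map_smul _ _
    have hc'x : c' x = (r⁻¹ + s) * (2 * ⟪φ x, L x⟫)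
        + ‖φ x‖ ^ 2 * ((-(r ^ 2)⁻¹) * (r⁻¹ * (r ^ 2))) := by
      simp only [hc'def, ContinuousLinearMap.add_apply, ContinuousLinearMap.smul_apply,
        ContinuousLinearMap.coe_smul', Pi.smul_apply, ContinuousLinearMap.comp_apply,
        innerSL_apply_apply, smul_eq_mul, hinner_self]
      ring
    rw [hc'x]
    have hip : ⟪φ x, radialDeriv φ x⟫ = r⁻¹ * ⟪φ x, L x⟫ := by
      rw [hrad, real_inner_smul_right]
    simp only [dfun, cfun, hip, ← hrdef]
    field_simp
    ring
  · -- off the support : both sides vanish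
    have hUopen := (isClosed_tsupport φ).isOpen_compl
    have hgk0 : ∀ k : Fin 3, fderiv ℝ (fun y => cfun φ s y * y k) x = 0 := by
      intro k
      have hev : (fun y => cfun φ s y * y k) =ᶠ[nhds x] (fun _ => 0) :=
        Filter.eventually_of_mem (hUopen.mem_nhds hx)
          (fun y hy => by simp [cfun, phi_zero hy])
      rw [Filter.EventuallyEq.fderiv_eq hev]
      exact fderiv_const_apply 0
    simp [hgk0, dfun, phi_zero hx]

end Aux

section Aux2
variable {φ : E3 → ℂ} {s : ℝ}
variable (hφ : ContDiff ℝ (⊤ : ℕ∞) φ) (hc : HasCompactSupport φ) (h0 : (0 : E3) ∉ tsupport φ)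

include hc h0 in
lemma integrable_helper (F : E3 → ℝ)
    (hz : ∀ x ∉ tsupport φ, F x = 0)
    (hcont : ∀ x : E3, x ≠ 0 → ContinuousAt F x) :
    Integrable F := by
  have hFc : Continuous F := continuous_iff_continuousAt.2 (fun x => by
    by_cases hx : x ∈ tsupport φ
    · exact hcont x (fun h => h0 (h ▸ hx))
    · have hev : F =ᶠ[nhds x] fun _ => 0 :=
        Filter.eventually_of_mem ((isClosed_tsupport φ).isOpen_compl.mem_nhds hx)
          (fun y hy => hz y hy)
      exact ContinuousAt.congr continuousAt_const hev.symm)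
  exact hFc.integrable_of_hasCompactSupport (HasCompactSupport.intro hc hz)

include hφ in
lemma contAt_radial {x : E3} (hx : x ≠ 0) : ContinuousAt (radialDeriv φ) x := by
  have hfd : Continuous (fderiv ℝ φ) := hφ.continuous_fderiv (by simp)
  have hv : ContinuousAt (fun y : E3 => ‖y‖⁻¹ • y) x :=
    (continuous_norm.continuousAt.inv₀ (norm_ne_zero_iff.2 hx)).smul continuousAt_id
  exact (isBoundedBilinearMap_apply.continuous.continuousAt).comp
    (hfd.continuousAt.prodMk hv)

include hφ hc h0 in
lemma int1 : Integrable (fun x : E3 => ‖φ x‖ ^ 2 / ‖x‖) := by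
  refine integrable_helper hc h0 _ (fun x hx => by simp [phi_zero hx]) (fun x hx => ?_)
  exact ((hφ.continuous.norm.pow 2).continuousAt).div continuous_norm.continuousAt
    (norm_ne_zero_iff.2 hx)

include hφ hc in
lemma int2 : Integrable (fun x : E3 => ‖φ x‖ ^ 2) :=
  (hφ.continuous.norm.pow 2).integrable_of_hasCompactSupport
    (HasCompactSupport.intro hc (fun y hy => by simp [phi_zero hy]))

include hφ hc h0 in
lemma int3 : Integrable (fun x : E3 => ‖x‖ * ‖radialDeriv φ x‖ ^ 2) := by
  refine integrable_helper hc h0 _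
    (fun x hx => by simp [radial_zero hx]) (fun x hx => ?_)
  exact continuous_norm.continuousAt.mul (((contAt_radial hφ hx).norm).pow 2)

include hφ hc in
lemma int4 : Integrable (fun x : E3 => ‖x‖ * ‖φ x‖ ^ 2) :=
  (continuous_norm.mul (hφ.continuous.norm.pow 2)).integrable_of_hasCompactSupport
    (HasCompactSupport.intro hc (fun y hy => by simp [phi_zero hy]))

include hφ hc h0 in
lemma int6 : Integrable (fun x : E3 => (1 + s * ‖x‖) * (2 * ⟪φ x, radialDeriv φ x⟫)) := by
  refine integrable_helper hc h0 _
    (fun x hx => by simp [phi_zero hx]) (fun x hx => ?_)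
  exact (continuousAt_const.add (continuousAt_const.mul continuous_norm.continuousAt)).mul
    (continuousAt_const.mul
      (hφ.continuous.continuousAt.inner (contAt_radial hφ hx)))

include hφ hc h0 in
lemma integral_dfun_eq_zero : ∫ x : E3, dfun φ s x = 0 := by
  have hproj : ∀ k : Fin 3, ContDiff ℝ (⊤ : ℕ∞) (fun y : E3 => y k) :=
    fun k => (EuclideanSpace.proj k : E3 →L[ℝ] ℝ).contDiff
  have hgk : ∀ k : Fin 3, ContDiff ℝ (⊤ : ℕ∞) (fun y : E3 => cfun φ s y * y k) :=
    fun k => (contDiff_cfun hφ h0).mul (hproj k)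
  have hck : ∀ k : Fin 3, HasCompactSupport (fun y : E3 => cfun φ s y * y k) :=
    fun k => HasCompactSupport.intro hc (fun y hy => by simp [cfun, phi_zero hy])
  have h1 : ∀ k : Fin 3,
      ∫ x : E3, fderiv ℝ (fun y => cfun φ s y * y k) x (EuclideanSpace.single k 1) = 0 :=
    fun k => integral_dirDeriv_eq_zero _ (hgk k) (hck k) _
  have hint : ∀ k : Fin 3, Integrable
      (fun x : E3 => fderiv ℝ (fun y => cfun φ s y * y k) x (EuclideanSpace.single k 1)) := by
    intro k
    refine Continuous.integrable_of_hasCompactSupport ?_ ?_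
    · exact (((hgk k).continuous_fderiv (by simp))).clm_apply continuous_const
    · refine HasCompactSupport.intro hc (fun y hy => ?_)
      have hev : (fun y : E3 => cfun φ s y * y k) =ᶠ[nhds y] (fun _ => 0) :=
        Filter.eventually_of_mem ((isClosed_tsupport φ).isOpen_compl.mem_nhds hy)
          (fun z hz => by simp [cfun, phi_zero hz])
      rw [Filter.EventuallyEq.fderiv_eq hev, fderiv_const_apply 0]
      rfl
  calc ∫ x : E3, dfun φ s x
      = ∫ x : E3, ∑ k : Fin 3,
          fderiv ℝ (fun y => cfun φ s y * y k) x (EuclideanSpace.single k 1) := by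
        refine integral_congr_ae (Filter.Eventually.of_forall (fun x => ?_))
        exact (div_identity hφ h0 x).symm
    _ = ∑ k : Fin 3, ∫ x : E3,
          fderiv ℝ (fun y => cfun φ s y * y k) x (EuclideanSpace.single k 1) :=
        integral_finset_sum _ (fun k _ => hint k)
    _ = 0 := by simp [h1]

include hφ in
lemma pointwise_ineq (hs : 0 ≤ s) (x : E3) :
    0 ≤ ‖x‖ * ‖radialDeriv φ x‖ ^ 2 + (1 + s * ‖x‖) * (2 * ⟪φ x, radialDeriv φ x⟫)
        + (‖x‖⁻¹ + 2 * s + s ^ 2 * ‖x‖) * ‖φ x‖ ^ 2 := by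
  by_cases hx : x = 0
  · subst hx
    have hrad0 : radialDeriv φ (0 : E3) = 0 := by
      rw [show radialDeriv φ (0 : E3) = fderiv ℝ φ 0 (‖(0:E3)‖⁻¹ • (0:E3)) from rfl,
        smul_zero, map_zero]
    rw [hrad0]
    simp only [norm_zero, _root_.inv_zero, inner_zero_right, mul_zero, zero_mul, zero_add, add_zero,
      mul_one, one_mul]
    nlinarith [sq_nonneg ‖φ (0:E3)‖, sq_nonneg (‖φ (0:E3)‖ * s)]
  · have ht : (0:ℝ) < ‖x‖ := norm_pos_iff.2 hx
    set t : ℝ := ‖x‖ with htdef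
    set a : ℂ := radialDeriv φ x with hadef
    set b : ℂ := φ x with hbdef
    have key : (0:ℝ) ≤ ‖a + (t⁻¹ + s) • b‖ ^ 2 := sq_nonneg _
    have hexp1 : ‖a + (t⁻¹ + s) • b‖ ^ 2
        = ‖a‖ ^ 2 + 2 * ((t⁻¹ + s) * ⟪b, a⟫) + (t⁻¹ + s) ^ 2 * ‖b‖ ^ 2 := by
      rw [norm_add_sq_real, real_inner_smul_right, norm_smul, mul_pow, Real.norm_eq_abs,
        sq_abs, real_inner_comm]
    rw [hexp1] at key
    have h3 := mul_nonneg ht.le key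
    have hexp2 : t * (‖a‖ ^ 2 + 2 * ((t⁻¹ + s) * ⟪b, a⟫) + (t⁻¹ + s) ^ 2 * ‖b‖ ^ 2)
        = t * ‖a‖ ^ 2 + (1 + s * t) * (2 * ⟪b, a⟫) + (t⁻¹ + 2 * s + s ^ 2 * t) * ‖b‖ ^ 2 := by
      field_simp
      ring
    rw [hexp2] at h3
    exact h3

end Aux2


theorem stmt0 (φ : E3 → ℂ) (hφ : ContDiff ℝ (⊤ : ℕ∞) φ) (hc : HasCompactSupport φ)
    (h0 : (0 : E3) ∉ tsupport φ) (m : ℝ) (hm : 0 ≤ m) :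
    (∫ x : E3, ‖φ x‖ ^ 2 / ‖x‖) + Real.sqrt (1 + m ^ 2) * ∫ x : E3, ‖φ x‖ ^ 2 ≤
      (∫ x : E3, ‖x‖ * ‖radialDeriv φ x‖ ^ 2) +
        (1 + m ^ 2) * ∫ x : E3, ‖x‖ * ‖φ x‖ ^ 2 := by
  set s := Real.sqrt (1 + m ^ 2) with hsdef
  have h1m : (0:ℝ) < 1 + m ^ 2 := by positivity
  have hs0 : 0 ≤ s := Real.sqrt_nonneg _
  have hs2 : s ^ 2 = 1 + m ^ 2 := Real.sq_sqrt h1m.le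
  have hi1 := int1 hφ hc h0
  have hi2 := int2 hφ hc
  have hi3 := int3 hφ hc h0
  have hi4 := int4 hφ hc
  have hi6 := int6 (s := s) hφ hc h0
  have hdiv := integral_dfun_eq_zero (s := s) hφ hc h0
  have hA1 : Integrable (fun x : E3 => 2 * (‖φ x‖ ^ 2 / ‖x‖)) := hi1.const_mul 2
  have hA2 : Integrable (fun x : E3 => 3 * s * ‖φ x‖ ^ 2) := hi2.const_mul (3 * s)
  have hA12 : Integrable (fun x : E3 => 2 * (‖φ x‖ ^ 2 / ‖x‖) + 3 * s * ‖φ x‖ ^ 2) :=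
    hA1.add hA2
  have hB1 : Integrable (fun x : E3 => 2 * s * ‖φ x‖ ^ 2) := hi2.const_mul (2 * s)
  have hB2 : Integrable (fun x : E3 => s ^ 2 * (‖x‖ * ‖φ x‖ ^ 2)) := hi4.const_mul (s ^ 2)
  have hB12 : Integrable (fun x : E3 => 2 * s * ‖φ x‖ ^ 2 + s ^ 2 * (‖x‖ * ‖φ x‖ ^ 2)) :=
    hB1.add hB2
  have hB : Integrable (fun x : E3 => ‖φ x‖ ^ 2 / ‖x‖
      + (2 * s * ‖φ x‖ ^ 2 + s ^ 2 * (‖x‖ * ‖φ x‖ ^ 2))) := hi1.add hB12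
  have hC : Integrable (fun x : E3 => ‖x‖ * ‖radialDeriv φ x‖ ^ 2
      + (1 + s * ‖x‖) * (2 * ⟪φ x, radialDeriv φ x⟫)) := hi3.add hi6
  have hsplit : (2:ℝ) * (∫ x : E3, ‖φ x‖ ^ 2 / ‖x‖) + 3 * s * (∫ x : E3, ‖φ x‖ ^ 2)
      + (∫ x : E3, (1 + s * ‖x‖) * (2 * ⟪φ x, radialDeriv φ x⟫)) = 0 := by
    rw [← hdiv]
    have hcongr : ∫ x : E3, dfun φ s x
        = ∫ x : E3, (2 * (‖φ x‖ ^ 2 / ‖x‖) + 3 * s * ‖φ x‖ ^ 2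
          + (1 + s * ‖x‖) * (2 * ⟪φ x, radialDeriv φ x⟫)) := by
      refine integral_congr_ae (Filter.Eventually.of_forall (fun x => ?_))
      simp only [dfun, div_eq_mul_inv]
      ring
    rw [hcongr, integral_add hA12 hi6, integral_add hA1 hA2,
      integral_const_mul, integral_const_mul]
  have hnn : 0 ≤ ∫ x : E3, (‖x‖ * ‖radialDeriv φ x‖ ^ 2
      + (1 + s * ‖x‖) * (2 * ⟪φ x, radialDeriv φ x⟫)
      + (‖x‖⁻¹ + 2 * s + s ^ 2 * ‖x‖) * ‖φ x‖ ^ 2) :=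
    integral_nonneg (pointwise_ineq hφ hs0)
  have heq : ∫ x : E3, (‖x‖ * ‖radialDeriv φ x‖ ^ 2
      + (1 + s * ‖x‖) * (2 * ⟪φ x, radialDeriv φ x⟫)
      + (‖x‖⁻¹ + 2 * s + s ^ 2 * ‖x‖) * ‖φ x‖ ^ 2)
      = ((∫ x : E3, ‖x‖ * ‖radialDeriv φ x‖ ^ 2)
        + ∫ x : E3, (1 + s * ‖x‖) * (2 * ⟪φ x, radialDeriv φ x⟫))
        + ((∫ x : E3, ‖φ x‖ ^ 2 / ‖x‖) + ((2 * s) * (∫ x : E3, ‖φ x‖ ^ 2)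
          + s ^ 2 * (∫ x : E3, ‖x‖ * ‖φ x‖ ^ 2))) := by
    have hcongr : ∫ x : E3, (‖x‖ * ‖radialDeriv φ x‖ ^ 2
        + (1 + s * ‖x‖) * (2 * ⟪φ x, radialDeriv φ x⟫)
        + (‖x‖⁻¹ + 2 * s + s ^ 2 * ‖x‖) * ‖φ x‖ ^ 2)
        = ∫ x : E3, ((‖x‖ * ‖radialDeriv φ x‖ ^ 2
          + (1 + s * ‖x‖) * (2 * ⟪φ x, radialDeriv φ x⟫))
          + (‖φ x‖ ^ 2 / ‖x‖ + (2 * s * ‖φ x‖ ^ 2 + s ^ 2 * (‖x‖ * ‖φ x‖ ^ 2)))) := by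
      refine integral_congr_ae (Filter.Eventually.of_forall (fun x => ?_))
      simp only [div_eq_mul_inv]
      ring
    rw [hcongr, integral_add hC hB, integral_add hi3 hi6, integral_add hi1 hB12,
      integral_add hB1 hB2, integral_const_mul, integral_const_mul]
  rw [heq] at hnn
  rw [← hs2]
  linarith [hnn, hsplit]
end
end

section
/- For a smooth compactly supported function φ: ℝ³ → ℂ, the inequality ∫_{ℝ³} |φ|² dx ≤ (2/3) (∫_{ℝ³} |x| |φ|² dx)^{1/2} (∫_{ℝ³} |x| |∂_r φ|² dx)^{1/2} holds, where ∂_r is the radial derivative (x/|x|)·∇. -/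
noncomputable section
open MeasureTheory Matrix Finset

theorem stmt3 (φ : E3 → ℂ) (hφ : ContDiff ℝ (⊤ : ℕ∞) φ) (hc : HasCompactSupport φ) :
    (∫ x : E3, ‖φ x‖ ^ 2) ≤
      2 / 3 * Real.sqrt (∫ x : E3, ‖x‖ * ‖φ x‖ ^ 2) *
        Real.sqrt (∫ x : E3, ‖x‖ * ‖radialDeriv φ x‖ ^ 2) := by
  have hφ1 : Differentiable ℝ φ := hφ.differentiable (by simp)
  have hD : Continuous (fderiv ℝ φ) := hφ.continuous_fderiv (by simp)
  have hDc : HasCompactSupport (fderiv ℝ φ) := hc.fderiv (𝕜 := ℝ)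
  set g : E3 → ℝ := fun x => ‖φ x‖ ^ 2 with hg_def
  have hg : ContDiff ℝ (⊤ : ℕ∞) g := hφ.norm_sq ℂ
  have hg1 : Differentiable ℝ g := hg.differentiable (by simp)
  have hgc : HasCompactSupport g := by
    simpa [Function.comp_def, hg_def] using hc.comp_left (g := fun z : ℂ => ‖z‖ ^ 2) (by simp)
  have hgcont : Continuous g := hg.continuous
  have hg'cont : Continuous (fderiv ℝ g) := hg.continuous_fderiv (by simp)
  have hg'c : HasCompactSupport (fderiv ℝ g) := hgc.fderiv (𝕜 := ℝ)
  have hgderiv : ∀ x, fderiv ℝ g x = (2 • (innerSL ℝ (φ x)).comp (fderiv ℝ φ x)) := fun x =>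
    ((hφ1 x).hasFDerivAt.norm_sq).fderiv
  -- integrability of basic pieces
  have hgint : Integrable g := hgcont.integrable_of_hasCompactSupport hgc
  have hint3 : ∀ k : Fin 3, Integrable (fun x : E3 => x k * fderiv ℝ g x (EuclideanSpace.single k 1)) := by
    intro k
    apply Continuous.integrable_of_hasCompactSupport
    · exact ((EuclideanSpace.proj (𝕜 := ℝ) k).continuous).mul (hg'cont.clm_apply continuous_const)
    · exact (hg'c.comp_left (g := fun L : E3 →L[ℝ] ℝ => L (EuclideanSpace.single k 1))
        (by simp)).mul_left
  -- Step A: integration by parts per coordinate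
  have key : ∀ k : Fin 3,
      (∫ x : E3, x k * fderiv ℝ g x (EuclideanSpace.single k 1)) = - ∫ x : E3, g x := by
    intro k
    have hcoord : Differentiable ℝ (fun x : E3 => x k) :=
      (EuclideanSpace.proj (𝕜 := ℝ) k).differentiable
    have hcoordderiv : ∀ x : E3, fderiv ℝ (fun y : E3 => y k) x (EuclideanSpace.single k 1) = 1 := by
      intro x
      have : fderiv ℝ (fun y : E3 => y k) x = EuclideanSpace.proj (𝕜 := ℝ) k :=
        (EuclideanSpace.proj (𝕜 := ℝ) k).fderiv
      rw [this]
      simp [EuclideanSpace.single_apply]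
    have h1 : Integrable (fun x : E3 =>
        fderiv ℝ (fun y : E3 => y k) x (EuclideanSpace.single k 1) * g x) := by
      apply hgint.congr
      filter_upwards with x
      rw [hcoordderiv x, one_mul]
    have h3 : Integrable (fun x : E3 => x k * g x) := by
      apply Continuous.integrable_of_hasCompactSupport
      · exact ((EuclideanSpace.proj (𝕜 := ℝ) k).continuous).mul hgcont
      · exact hgc.mul_left
    have := integral_mul_fderiv_eq_neg_fderiv_mul_of_integrable
      (f := fun x : E3 => x k) (g := g) (v := EuclideanSpace.single k 1) (μ := volume)
      h1 (hint3 k) h3 (fun x _ => hcoord x) (fun x _ => hg1 x)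
    rw [this]
    congr 1
    apply integral_congr_ae
    filter_upwards with x
    rw [hcoordderiv x, one_mul]
  -- Step B: sum over coordinates
  have hdecomp : ∀ x : E3, fderiv ℝ g x x
      = ∑ k : Fin 3, x k * fderiv ℝ g x (EuclideanSpace.single k 1) := by
    intro x
    have hx : (∑ k : Fin 3, x k • EuclideanSpace.single k (1:ℝ)) = x := by
      ext i
      rw [WithLp.ofLp_sum, Finset.sum_apply]
      simp [EuclideanSpace.single_apply, smul_eq_mul]
    calc fderiv ℝ g x x = fderiv ℝ g x (∑ k : Fin 3, x k • EuclideanSpace.single k (1:ℝ)) :=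
          congrArg (fderiv ℝ g x) hx.symm
      _ = ∑ k : Fin 3, x k * fderiv ℝ g x (EuclideanSpace.single k 1) := by
          rw [map_sum]
          exact Finset.sum_congr rfl (fun k _ => by rw [ContinuousLinearMap.map_smul, smul_eq_mul])
  have hhint : Integrable (fun x : E3 => fderiv ℝ g x x) := by
    apply Continuous.integrable_of_hasCompactSupport
    · exact hg'cont.clm_apply continuous_id
    · apply hg'c.mono
      intro x hx
      simp only [Function.mem_support] at hx ⊢
      intro h0
      exact hx (by rw [h0]; simp)
  have hsum : (∫ x : E3, fderiv ℝ g x x) = -3 * ∫ x : E3, g x := by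
    calc (∫ x : E3, fderiv ℝ g x x)
        = ∫ x : E3, ∑ k : Fin 3, x k * fderiv ℝ g x (EuclideanSpace.single k 1) := by
          exact integral_congr_ae (by filter_upwards with x using hdecomp x)
      _ = ∑ k : Fin 3, ∫ x : E3, x k * fderiv ℝ g x (EuclideanSpace.single k 1) :=
          integral_finset_sum _ (fun k _ => hint3 k)
      _ = ∑ _k : Fin 3, - ∫ x : E3, g x := by
          exact Finset.sum_congr rfl (fun k _ => key k)
      _ = -3 * ∫ x : E3, g x := by
          simp only [Finset.sum_const, Finset.card_univ, Fintype.card_fin, nsmul_eq_mul,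
            Nat.cast_ofNat]
          ring
  -- Step C+D: pointwise identity
  have hCD : ∀ x : E3, fderiv ℝ g x x
      = 2 * (‖x‖ * (inner ℝ (φ x) (radialDeriv φ x) : ℝ)) := by
    intro x
    rcases eq_or_ne x 0 with h0 | h0
    · simp [h0, radialDeriv]
    · have hxx : ‖x‖ • (‖x‖⁻¹ • x) = x := by
        rw [smul_smul, mul_inv_cancel₀ (norm_ne_zero_iff.mpr h0), one_smul]
      calc fderiv ℝ g x x = fderiv ℝ g x (‖x‖ • (‖x‖⁻¹ • x)) := by rw [hxx]
        _ = ‖x‖ * fderiv ℝ g x (‖x‖⁻¹ • x) := by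
            rw [ContinuousLinearMap.map_smul, smul_eq_mul]
        _ = ‖x‖ * (2 * (inner ℝ (φ x) (radialDeriv φ x) : ℝ)) := by
            rw [hgderiv x]
            rw [ContinuousLinearMap.smul_apply, ContinuousLinearMap.comp_apply,
              innerSL_apply_apply]
            rw [show radialDeriv φ x = fderiv ℝ φ x (‖x‖⁻¹ • x) from rfl]
            norm_num [nsmul_eq_mul]
            exact Or.inl (by ring)
        _ = 2 * (‖x‖ * (inner ℝ (φ x) (radialDeriv φ x) : ℝ)) := by ring
  -- u and v
  set u : E3 → ℝ := fun x => Real.sqrt ‖x‖ * ‖φ x‖ with hu_def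
  set v : E3 → ℝ := fun x => Real.sqrt ‖x‖ * ‖radialDeriv φ x‖ with hv_def
  have hu_cont : Continuous u :=
    (Real.continuous_sqrt.comp continuous_norm).mul hφ.continuous.norm
  have hu_c : HasCompactSupport u := hc.norm.mul_left
  have hrad_meas : Measurable (radialDeriv φ) := by
    have h1 : Measurable fun x : E3 => (fderiv ℝ φ x, ‖x‖⁻¹ • x) :=
      hD.measurable.prodMk ((measurable_norm.inv).smul measurable_id)
    exact (isBoundedBilinearMap_apply.continuous.measurable).comp h1
  have hrad_c : HasCompactSupport (radialDeriv φ) := by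
    apply hDc.mono
    intro x hx
    simp only [Function.mem_support] at hx ⊢
    intro h0
    exact hx (by simp [radialDeriv, h0])
  have hrad_bd : ∀ x : E3, ‖radialDeriv φ x‖ ≤ ‖fderiv ℝ φ x‖ := by
    intro x
    calc ‖radialDeriv φ x‖ ≤ ‖fderiv ℝ φ x‖ * ‖‖x‖⁻¹ • x‖ := (fderiv ℝ φ x).le_opNorm _
      _ ≤ ‖fderiv ℝ φ x‖ * 1 := by
          apply mul_le_mul_of_nonneg_left _ (norm_nonneg _)
          rcases eq_or_ne x 0 with h0 | h0
          · simp [h0]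
          · rw [norm_smul, norm_inv, norm_norm,
              inv_mul_cancel₀ (norm_ne_zero_iff.mpr h0)]
      _ = ‖fderiv ℝ φ x‖ := mul_one _
  obtain ⟨C, hC⟩ := hD.bounded_above_of_compact_support hDc
  have hC0 : 0 ≤ C := le_trans (norm_nonneg _) (hC 0)
  obtain ⟨R, hRsub⟩ := hDc.isCompact.isBounded.subset_closedBall 0
  have hR0 : 0 ≤ R ∨ True := Or.inr trivial
  have hv_meas : AEStronglyMeasurable v volume :=
    ((Real.continuous_sqrt.comp continuous_norm).measurable.mul
      hrad_meas.norm).aestronglyMeasurable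
  have hv_c : HasCompactSupport v := hrad_c.norm.mul_left
  have hv_bd : ∀ x : E3, ‖v x‖ ≤ Real.sqrt (max R 0) * C := by
    intro x
    rw [hv_def]
    rw [Real.norm_of_nonneg (mul_nonneg (Real.sqrt_nonneg _) (norm_nonneg _))]
    by_cases hx : x ∈ tsupport (fderiv ℝ φ)
    · have h1 : ‖x‖ ≤ max R 0 := by
        have := hRsub hx
        simp only [Metric.mem_closedBall, dist_zero_right] at this
        exact this.trans (le_max_left _ _)
      exact mul_le_mul (Real.sqrt_le_sqrt h1)
        ((hrad_bd x).trans (hC x)) (norm_nonneg _) (Real.sqrt_nonneg _)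
    · have h0 : fderiv ℝ φ x = 0 := image_eq_zero_of_notMem_tsupport hx
      have : radialDeriv φ x = 0 := by simp [radialDeriv, h0]
      rw [this]
      simp
      positivity
  have hv2 : MemLp v 2 volume :=
    hv_c.memLp_of_bound hv_meas _ (Filter.Eventually.of_forall hv_bd)
  have hu2 : MemLp u 2 volume := hu_cont.memLp_of_hasCompactSupport hu_c
  -- bound for u
  obtain ⟨Cp, hCp⟩ := hφ.continuous.bounded_above_of_compact_support hc
  have hCp0 : 0 ≤ Cp := le_trans (norm_nonneg _) (hCp 0)
  obtain ⟨R1, hR1sub⟩ := hc.isCompact.isBounded.subset_closedBall 0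
  have hu_bd : ∀ x : E3, ‖u x‖ ≤ Real.sqrt (max R1 0) * Cp := by
    intro x
    rw [hu_def]
    rw [Real.norm_of_nonneg (mul_nonneg (Real.sqrt_nonneg _) (norm_nonneg _))]
    by_cases hx : x ∈ tsupport φ
    · have h1 : ‖x‖ ≤ max R1 0 := by
        have := hR1sub hx
        simp only [Metric.mem_closedBall, dist_zero_right] at this
        exact this.trans (le_max_left _ _)
      exact mul_le_mul (Real.sqrt_le_sqrt h1) (hCp x) (norm_nonneg _) (Real.sqrt_nonneg _)
    · have h0 : φ x = 0 := image_eq_zero_of_notMem_tsupport hx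
      rw [h0]
      simp
      positivity
  -- integrability of u*v
  have huv_c : HasCompactSupport (fun x : E3 => u x * v x) := hv_c.mul_left
  have huv_int : Integrable (fun x : E3 => u x * v x) := by
    rw [← memLp_one_iff_integrable]
    apply huv_c.memLp_of_bound (hu_cont.aestronglyMeasurable.mul hv_meas)
      ((Real.sqrt (max R1 0) * Cp) * (Real.sqrt (max R 0) * C))
    filter_upwards with x
    rw [norm_mul]
    exact mul_le_mul (hu_bd x) (hv_bd x) (norm_nonneg _)
      (by positivity)
  -- main inequality chain
  have hmono : ∫ x : E3, -(fderiv ℝ g x x) ≤ ∫ x : E3, 2 * (u x * v x) := by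
    apply integral_mono hhint.neg (huv_int.const_mul 2)
    intro x
    have h4 := abs_le.mp (abs_real_inner_le_norm (φ x) (radialDeriv φ x))
    have h7 : 0 ≤ ‖x‖ * ((inner ℝ (φ x) (radialDeriv φ x) : ℝ) + ‖φ x‖ * ‖radialDeriv φ x‖) :=
      mul_nonneg (norm_nonneg x) (by linarith [h4.1])
    have h2 : Real.sqrt ‖x‖ * Real.sqrt ‖x‖ = ‖x‖ := Real.mul_self_sqrt (norm_nonneg x)
    calc -(fderiv ℝ g x x)
        = -(2 * (‖x‖ * (inner ℝ (φ x) (radialDeriv φ x) : ℝ))) := by rw [hCD x]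
      _ ≤ 2 * (‖x‖ * (‖φ x‖ * ‖radialDeriv φ x‖)) := by nlinarith [h7]
      _ = 2 * (u x * v x) := by
          simp only [hu_def, hv_def]
          linear_combination (-2 * ‖φ x‖ * ‖radialDeriv φ x‖) * h2
  have hg_le : (∫ x : E3, g x) ≤ 2 / 3 * ∫ x : E3, u x * v x := by
    have h5 : ∫ x : E3, -(fderiv ℝ g x x) = 3 * ∫ x : E3, g x := by
      rw [integral_neg, hsum]; ring
    have h6 : ∫ x : E3, 2 * (u x * v x) = 2 * ∫ x : E3, u x * v x :=
      integral_const_mul 2 _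
    rw [h5, h6] at hmono
    linarith
  -- Hölder / Cauchy-Schwarz
  have hpq : Real.HolderConjugate 2 2 := Real.HolderConjugate.two_two
  have hof : ENNReal.ofReal (2:ℝ) = 2 := by
    rw [ENNReal.ofReal_ofNat]
  have hH := integral_mul_le_Lp_mul_Lq_of_nonneg (μ := volume) hpq
    (f := u) (g := v)
    (Filter.Eventually.of_forall fun x => mul_nonneg (Real.sqrt_nonneg _) (norm_nonneg _))
    (Filter.Eventually.of_forall fun x => mul_nonneg (Real.sqrt_nonneg _) (norm_nonneg _))
    (by rw [hof]; exact hu2) (by rw [hof]; exact hv2)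
  have hA : (∫ x : E3, u x ^ (2:ℝ)) = ∫ x : E3, ‖x‖ * ‖φ x‖ ^ 2 := by
    apply integral_congr_ae
    filter_upwards with x
    rw [hu_def]
    rw [show (2:ℝ) = ((2:ℕ):ℝ) by norm_num, Real.rpow_natCast]
    rw [mul_pow, Real.sq_sqrt (norm_nonneg x)]
  have hB : (∫ x : E3, v x ^ (2:ℝ)) = ∫ x : E3, ‖x‖ * ‖radialDeriv φ x‖ ^ 2 := by
    apply integral_congr_ae
    filter_upwards with x
    rw [hv_def]
    rw [show (2:ℝ) = ((2:ℕ):ℝ) by norm_num, Real.rpow_natCast]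
    rw [mul_pow, Real.sq_sqrt (norm_nonneg x)]
  rw [hA, hB] at hH
  have hAnn : 0 ≤ ∫ x : E3, ‖x‖ * ‖φ x‖ ^ 2 :=
    integral_nonneg fun x => by positivity
  have hBnn : 0 ≤ ∫ x : E3, ‖x‖ * ‖radialDeriv φ x‖ ^ 2 :=
    integral_nonneg fun x => by positivity
  rw [← Real.sqrt_eq_rpow, ← Real.sqrt_eq_rpow] at hH
  calc (∫ x : E3, g x) ≤ 2 / 3 * ∫ x : E3, u x * v x := hg_le
    _ ≤ 2 / 3 * (Real.sqrt (∫ x : E3, ‖x‖ * ‖φ x‖ ^ 2) *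
        Real.sqrt (∫ x : E3, ‖x‖ * ‖radialDeriv φ x‖ ^ 2)) := by
        apply mul_le_mul_of_nonneg_left hH (by norm_num)
    _ = 2 / 3 * Real.sqrt (∫ x : E3, ‖x‖ * ‖φ x‖ ^ 2) *
        Real.sqrt (∫ x : E3, ‖x‖ * ‖radialDeriv φ x‖ ^ 2) := by ring
end
end

section
/- For φ(x) = C e^{-λ|x|} with C ∈ ℂ, λ > 0, equality holds in the interpolation inequality: ∫_{ℝ³} |φ|² dx = (2/3)(∫_{ℝ³} |x||φ|² dx)^{1/2}(∫_{ℝ³} |x||∂_r φ|² dx)^{1/2}. -/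
/-! Since `φ` depends only on `‖x‖` and `∂_r φ = -λ φ` away from the origin, polar
coordinates turn the three integrals into `‖C‖²` times multiples of the moments
`∫₀^∞ r ^ k e^{-2λr} dr = k! / (2λ) ^ (k + 1)` for `k = 2, 3`, and the identity reduces to
`2! / (2λ)³ = 2/3 · λ · 3! / (2λ)⁴`. -/

noncomputable section
open MeasureTheory Matrix Finset

open Real Set

theorem integral_pow_mul_exp_neg_mul_Ioi (n : ℕ) {a : ℝ} (ha : 0 < a) :
    ∫ y in Ioi (0 : ℝ), y ^ n * exp (-(a * y)) = n.factorial / a ^ (n + 1) := by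
  have h := integral_rpow_mul_exp_neg_mul_Ioi (a := n + 1) (by positivity) ha
  rw [add_sub_cancel_right, Gamma_nat_eq_factorial, ← Nat.cast_succ] at h
  simp only [rpow_natCast] at h
  rw [h, _root_.one_div_pow, one_div_mul_eq_div, Nat.succ_eq_add_one]

section Radial

variable {E : Type*} [NormedAddCommGroup E] [NormedSpace ℝ E] [Nontrivial E]
  [FiniteDimensional ℝ E] [MeasurableSpace E] [BorelSpace E]
  (μ : Measure E) [μ.IsAddHaarMeasure]

theorem integral_norm_pow_mul_exp_neg_mul (k : ℕ) {a : ℝ} (ha : 0 < a) :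
    ∫ x, ‖x‖ ^ k * exp (-(a * ‖x‖)) ∂μ =
      Module.finrank ℝ E * μ.real (Metric.ball 0 1) *
        ((Module.finrank ℝ E - 1 + k).factorial / a ^ (Module.finrank ℝ E - 1 + k + 1)) := by
  rw [integral_fun_norm_addHaar μ (fun r => r ^ k * exp (-(a * r))), nsmul_eq_mul, smul_eq_mul,
    ← integral_pow_mul_exp_neg_mul_Ioi _ ha, mul_assoc]
  congr 2
  refine setIntegral_congr_fun measurableSet_Ioi fun y _ => ?_
  simp only [smul_eq_mul, pow_add]
  ring

theorem integral_exp_neg_mul_norm_eq_mul_integral_norm_mul {a : ℝ} (ha : 0 < a) :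
    ∫ x, exp (-(a * ‖x‖)) ∂μ =
      a / Module.finrank ℝ E * ∫ x, ‖x‖ * exp (-(a * ‖x‖)) ∂μ := by
  have h0 := integral_norm_pow_mul_exp_neg_mul μ 0 ha
  have h1 := integral_norm_pow_mul_exp_neg_mul μ 1 ha
  simp only [pow_zero, one_mul, pow_one, add_zero] at h0 h1
  rw [h0, h1]
  obtain ⟨n, hn⟩ :=
    Nat.exists_eq_add_one_of_ne_zero (Module.finrank_pos (R := ℝ) (M := E)).ne'
  rw [hn, Nat.add_sub_cancel, Nat.factorial_succ]
  push_cast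
  field_simp
  ring

end Radial

theorem radialDeriv_comp_norm {F : Type*} [NormedAddCommGroup F] [NormedSpace ℝ F]
    {f : ℝ → F} {f' : F} {x : E3} (hx : x ≠ 0) (hf : HasDerivAt f f' ‖x‖) :
    radialDeriv (fun y => f ‖y‖) x = f' := by
  have hnorm : DifferentiableAt ℝ (‖·‖) x :=
    (contDiffAt_norm ℝ hx).differentiableAt one_ne_zero
  have hcomp := hf.hasFDerivAt.comp x hnorm.hasFDerivAt
  rw [radialDeriv, show (fun y : E3 => f ‖y‖) = f ∘ (‖·‖) from rfl, hcomp.fderiv]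
  simp [hnorm.fderiv_norm_self, norm_ne_zero_iff.2 hx]

theorem radialDeriv_const_mul_exp_neg_mul_norm (C : ℂ) (lam : ℝ) {x : E3} (hx : x ≠ 0) :
    radialDeriv (fun y => C * (exp (-lam * ‖y‖) : ℂ)) x =
      -lam * (C * (exp (-lam * ‖x‖) : ℂ)) := by
  rw [radialDeriv_comp_norm hx
    (((hasDerivAt_id' ‖x‖).const_mul (-lam)).exp.ofReal_comp.const_mul C)]
  push_cast
  ring

theorem stmt5 (C : ℂ) (lam : ℝ) (hlam : 0 < lam) (φ : E3 → ℂ)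
    (hφ : ∀ x, φ x = C * (Real.exp (-lam * ‖x‖) : ℝ)) :
    (∫ x : E3, ‖φ x‖ ^ 2) =
      2 / 3 * Real.sqrt (∫ x : E3, ‖x‖ * ‖φ x‖ ^ 2) *
        Real.sqrt (∫ x : E3, ‖x‖ * ‖radialDeriv φ x‖ ^ 2) := by
  have hnorm_sq (x : E3) : ‖φ x‖ ^ 2 = ‖C‖ ^ 2 * exp (-(2 * lam * ‖x‖)) := by
    rw [hφ, norm_mul, Complex.norm_real, norm_eq_abs, abs_exp, mul_pow, ← exp_nat_mul]
    ring_nf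
  have hradial :
      ∫ x : E3, ‖x‖ * ‖radialDeriv φ x‖ ^ 2 =
        lam ^ 2 * ∫ x : E3, ‖x‖ * ‖φ x‖ ^ 2 := by
    rw [← integral_const_mul]
    refine integral_congr_ae ?_
    filter_upwards [compl_mem_ae_iff.mpr (measure_singleton 0)] with x hx
    rw [funext hφ, radialDeriv_const_mul_exp_neg_mul_norm C lam hx, norm_mul, norm_neg,
      Complex.norm_real, norm_of_nonneg hlam.le]
    ring
  have hmass :
      ∫ x : E3, ‖φ x‖ ^ 2 = ‖C‖ ^ 2 * ∫ x : E3, exp (-(2 * lam * ‖x‖)) := by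
    simp only [hnorm_sq, integral_const_mul]
  have hmoment : ∫ x : E3, ‖x‖ * ‖φ x‖ ^ 2 =
      ‖C‖ ^ 2 * ∫ x : E3, ‖x‖ * exp (-(2 * lam * ‖x‖)) := by
    simp only [hnorm_sq, mul_left_comm ‖_‖, integral_const_mul]
  rw [hradial, sqrt_mul (sq_nonneg lam), sqrt_sq hlam.le, hmass, hmoment,
    integral_exp_neg_mul_norm_eq_mul_integral_norm_mul volume (by positivity : 0 < 2 * lam),
    finrank_euclideanSpace_fin]
  have hmoment_nonneg : 0 ≤ ‖C‖ ^ 2 * ∫ x : E3, ‖x‖ * exp (-(2 * lam * ‖x‖)) := by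
    positivity
  linear_combination (-(2 / 3) * lam) * sq_sqrt hmoment_nonneg
end
end

section
/- Let m ≥ 0 and define ψ₀ = (φ₀, χ₀) where φ₀(x) = C |x|^{-1} e^{-m|x|} with C ∈ ℂ² constant and χ₀ = i (σ·x/|x|) φ₀. Then ψ₀ satisfies (-i α·∇ + mβ - (1/|x|) I₄)ψ₀ = 0 on ℝ³∖{0}, i.e., ψ₀ is a zero-energy eigenfunction of the Dirac–Coulomb operator with coupling ν = 1. -/
/-!
Write `r = ‖x‖`, `f r = e^{-m r} / r` and `g r = f r / r`, so that `φ₀ = f(r) C` and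
`χ₀ = g(r) (σ·x)(i C)`. For a radial profile `h`, `σ·∇ (h(r) v) = (h'(r) / r) (σ·x) v`, and
since `∑ σ_k² = 3` and `(σ·x)² = r²`, also `σ·∇ (h(r) (σ·x) v) = (r h' + 3 h) v`. Both
equations thus reduce to scalar identities, which follow from `f' = -(1/r + m) f`.
-/

noncomputable section
open MeasureTheory Matrix Finset

theorem hasStrictFDerivAt_norm_of_ne_zero {F : Type*} [NormedAddCommGroup F]
    [InnerProductSpace ℝ F] {x : F} (hx : x ≠ 0) :
    HasStrictFDerivAt (fun y : F => ‖y‖) (‖x‖⁻¹ • innerSL ℝ x) x := by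
  have h := (hasStrictFDerivAt_norm_sq x).sqrt (by positivity)
  simp only [Real.sqrt_sq (norm_nonneg _)] at h
  convert h using 1
  ext v
  simp
  field_simp

theorem hasFDerivAt_ofReal_comp_norm {F : Type*} [NormedAddCommGroup F] [InnerProductSpace ℝ F]
    {g : ℝ → ℝ} {g' : ℝ} {x : F} (hx : x ≠ 0) (hg : HasDerivAt g g' ‖x‖) :
    HasFDerivAt (fun y : F => (g ‖y‖ : ℂ))
      (Complex.ofRealCLM.comp ((g' / ‖x‖) • innerSL ℝ x)) x := by
  have h := hg.comp_hasFDerivAt x (hasStrictFDerivAt_norm_of_ne_zero hx).hasFDerivAt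
  rw [smul_smul, ← div_eq_mul_inv] at h
  exact Complex.ofRealCLM.hasFDerivAt.comp x h

theorem hasDerivAt_inv_mul_exp (m : ℝ) {t : ℝ} (ht : t ≠ 0) :
    HasDerivAt (fun s => s⁻¹ * Real.exp (-m * s)) (-(t⁻¹ + m) * (t⁻¹ * Real.exp (-m * t))) t := by
  refine ((hasDerivAt_inv ht).fun_mul ((hasDerivAt_id' t).const_mul (-m)).exp).congr_deriv ?_
  ring

theorem pauli_mul_self (k : Fin 3) : pauli k * pauli k = 1 := by
  fin_cases k <;> ext i j <;> fin_cases i <;> fin_cases j <;>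
    simp [pauli, Matrix.mul_apply, Fin.sum_univ_two]

theorem sigmaDot_mul_self (a : Fin 3 → ℝ) :
    sigmaDot a * sigmaDot a = ((∑ k, a k ^ 2 : ℝ) : ℂ) • 1 := by
  ext i j
  fin_cases i <;> fin_cases j <;>
    simp [sigmaDot, pauli, Matrix.mul_apply, Fin.sum_univ_two, Fin.sum_univ_three] <;>
    ring_nf <;> simp [Complex.I_sq]

theorem sigmaDot_smul (c : ℝ) (a : Fin 3 → ℝ) : sigmaDot (c • a) = (c : ℂ) • sigmaDot a := by
  simp only [sigmaDot, Finset.smul_sum, smul_smul, Pi.smul_apply, smul_eq_mul, Complex.ofReal_mul]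

theorem sigmaDot_div_norm (y : E3) :
    sigmaDot (fun k => y k / ‖y‖) = ((‖y‖⁻¹ : ℝ) : ℂ) • sigmaDot y := by
  rw [← sigmaDot_smul]
  exact congrArg sigmaDot (funext fun k => div_eq_inv_mul _ _)

theorem sigmaDot_single (k : Fin 3) : sigmaDot (Pi.single k 1) = pauli k := by
  simp [sigmaDot]

theorem sum_smul_pauli_mulVec (a : Fin 3 → ℝ) (v : Fin 2 → ℂ) :
    ∑ k, (a k : ℂ) • pauli k *ᵥ v = sigmaDot a *ᵥ v := by
  simp only [sigmaDot, Matrix.sum_mulVec, Matrix.smul_mulVec]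

theorem sum_pauli_mulVec_pauli_mulVec (v : Fin 2 → ℂ) :
    ∑ k, pauli k *ᵥ pauli k *ᵥ v = (3 : ℂ) • v := by
  simp only [Matrix.mulVec_mulVec, pauli_mul_self, Matrix.one_mulVec, Finset.sum_const,
    Finset.card_univ, Fintype.card_fin]
  exact ofNat_smul_eq_nsmul ℂ 3 v |>.symm

theorem sigmaDot_mulVec_sigmaDot_mulVec (x : E3) (v : Fin 2 → ℂ) :
    sigmaDot x *ᵥ sigmaDot x *ᵥ v = ((‖x‖ ^ 2 : ℝ) : ℂ) • v := by
  rw [Matrix.mulVec_mulVec, sigmaDot_mul_self, EuclideanSpace.norm_sq_eq, Matrix.smul_mulVec,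
    Matrix.one_mulVec]
  simp

def sigmaDotMulVecCLM (v : Fin 2 → ℂ) : E3 →L[ℝ] Fin 2 → ℂ :=
  ∑ k, (Complex.ofRealCLM.comp (EuclideanSpace.proj k)).smulRight (pauli k *ᵥ v)

theorem sigmaDotMulVecCLM_apply (v : Fin 2 → ℂ) (y : E3) :
    sigmaDotMulVecCLM v y = sigmaDot y *ᵥ v := by
  simp only [sigmaDotMulVecCLM, sigmaDot, FunLike.coe_sum, Finset.sum_apply,
    ContinuousLinearMap.smulRight_apply, Matrix.sum_mulVec, Matrix.smul_mulVec]
  rfl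

theorem hasFDerivAt_sigmaDot_mulVec (v : Fin 2 → ℂ) (x : E3) :
    HasFDerivAt (fun y : E3 => sigmaDot y *ᵥ v) (sigmaDotMulVecCLM v) x := by
  convert (sigmaDotMulVecCLM v).hasFDerivAt (x := x) using 1
  exact funext fun y => (sigmaDotMulVecCLM_apply v y).symm

section Radial

variable {g : ℝ → ℝ} {g' : ℝ} {x : E3}

theorem sigmaGrad_radial_smul (hx : x ≠ 0) (hg : HasDerivAt g g' ‖x‖) (v : Fin 2 → ℂ) :
    sigmaGrad (fun y => (g ‖y‖ : ℂ) • v) x = ((g' / ‖x‖ : ℝ) : ℂ) • sigmaDot x *ᵥ v := by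
  rw [sigmaGrad, ((hasFDerivAt_ofReal_comp_norm hx hg).smul_const v).fderiv,
    ← Matrix.smul_mulVec, ← sigmaDot_smul, ← sum_smul_pauli_mulVec]
  congr! 1 with k
  simp only [ContinuousLinearMap.smulRight_apply, ContinuousLinearMap.comp_apply,
    _root_.smul_apply, innerSL_apply_apply, EuclideanSpace.inner_single_right, one_mul,
    conj_trivial, smul_eq_mul, Complex.ofRealCLM_apply, Matrix.mulVec_smul, Pi.smul_apply]

theorem sigmaGrad_radial_smul_sigmaDot (hx : x ≠ 0) (hg : HasDerivAt g g' ‖x‖) (v : Fin 2 → ℂ) :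
    sigmaGrad (fun y => (g ‖y‖ : ℂ) • sigmaDot y *ᵥ v) x =
      ((‖x‖ * g' + 3 * g ‖x‖ : ℝ) : ℂ) • v := by
  have h := (hasFDerivAt_ofReal_comp_norm hx hg).fun_smul (hasFDerivAt_sigmaDot_mulVec v x)
  have hk : ∀ k, fderiv ℝ (fun y : E3 => (g ‖y‖ : ℂ) • sigmaDot y *ᵥ v) x
      (EuclideanSpace.single k 1) =
        (g ‖x‖ : ℂ) • pauli k *ᵥ v + (((g' / ‖x‖) • x) k : ℂ) • sigmaDot x *ᵥ v := by
    intro k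
    rw [h.fderiv]
    simp only [_root_.add_apply, _root_.smul_apply, ContinuousLinearMap.smulRight_apply,
      ContinuousLinearMap.comp_apply, innerSL_apply_apply, EuclideanSpace.inner_single_right,
      sigmaDotMulVecCLM_apply, PiLp.ofLp_single, sigmaDot_single, one_mul, conj_trivial,
      smul_eq_mul, Complex.ofRealCLM_apply, WithLp.ofLp_smul, Pi.smul_apply]
  simp only [sigmaGrad, hk, Matrix.mulVec_add, Matrix.mulVec_smul, Finset.sum_add_distrib,
    ← Finset.smul_sum, sum_pauli_mulVec_pauli_mulVec, sum_smul_pauli_mulVec, WithLp.ofLp_smul,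
    sigmaDot_smul, Matrix.smul_mulVec, sigmaDot_mulVec_sigmaDot_mulVec, smul_smul, ← add_smul]
  congr 1
  push_cast
  field_simp
  ring

end Radial

theorem stmt16_general (m : ℝ) (C : Fin 2 → ℂ) (φ₀ χ₀ : E3 → Fin 2 → ℂ)
    (hφ₀ : ∀ x : E3, φ₀ x = ((‖x‖⁻¹ * Real.exp (-m * ‖x‖) : ℝ) : ℂ) • C)
    (hχ₀ : ∀ x : E3, χ₀ x = Complex.I • (sigmaDot (fun k => x k / ‖x‖)).mulVec (φ₀ x)) :
    ∀ x : E3, x ≠ 0 →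
      ((-Complex.I) • sigmaGrad χ₀ x + (m : ℂ) • φ₀ x -
        ((‖x‖⁻¹ : ℝ) : ℂ) • φ₀ x = 0) ∧
      ((-Complex.I) • sigmaGrad φ₀ x - (m : ℂ) • χ₀ x -
        ((‖x‖⁻¹ : ℝ) : ℂ) • χ₀ x = 0) := by
  intro x hx
  set f : ℝ → ℝ := fun t => t⁻¹ * Real.exp (-m * t)
  have hφ : φ₀ = fun y => (f ‖y‖ : ℂ) • C := funext hφ₀
  have hχ : χ₀ = fun y : E3 =>
      ((‖y‖⁻¹ * f ‖y‖ : ℝ) : ℂ) • sigmaDot y *ᵥ (Complex.I • C) := by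
    funext y
    rw [hχ₀, hφ, sigmaDot_div_norm]
    simp only [Matrix.smul_mulVec, Matrix.mulVec_smul, smul_smul, Complex.ofReal_mul]
    ring_nf
  have hr : ‖x‖ ≠ 0 := norm_ne_zero_iff.mpr hx
  have hr' : (‖x‖ : ℂ) ≠ 0 := Complex.ofReal_ne_zero.mpr hr
  have hf : HasDerivAt f _ ‖x‖ := hasDerivAt_inv_mul_exp m hr
  have hg : HasDerivAt (fun t => t⁻¹ * f t) _ ‖x‖ := (hasDerivAt_inv hr).mul hf
  subst hφ hχ
  rw [sigmaGrad_radial_smul_sigmaDot hx hg, sigmaGrad_radial_smul hx hf]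
  simp only [Matrix.mulVec_smul]
  constructor <;> match_scalars <;> simp only [f] <;> push_cast <;> field_simp
  · ring_nf
    rw [Complex.I_sq]
    ring
  · ring

theorem stmt16 (m : ℝ) (hm : 0 ≤ m) (C : Fin 2 → ℂ) (φ₀ χ₀ : E3 → Fin 2 → ℂ)
    (hφ₀ : ∀ x : E3, φ₀ x = ((‖x‖⁻¹ * Real.exp (-m * ‖x‖) : ℝ) : ℂ) • C)
    (hχ₀ : ∀ x : E3, χ₀ x = Complex.I • (sigmaDot (fun k => x k / ‖x‖)).mulVec (φ₀ x)) :
    ∀ x : E3, x ≠ 0 →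
      ((-Complex.I) • sigmaGrad χ₀ x + (m : ℂ) • φ₀ x -
        ((‖x‖⁻¹ : ℝ) : ℂ) • φ₀ x = 0) ∧
      ((-Complex.I) • sigmaGrad φ₀ x - (m : ℂ) • χ₀ x -
        ((‖x‖⁻¹ : ℝ) : ℂ) • χ₀ x = 0) :=
  stmt16_general m C φ₀ χ₀ hφ₀ hχ₀
end
end
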